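/- arXiv:2604.00521 — 6 statements merged into one kernel-verified Lean document; each statement's English description precedes it below -/
import Mathlib

section
/- Let A be the diagonal matrix with distinct eigenvalues λ₁, …, λ_m of multiplicities σ₁, …, σ_m as in the block structure, and let D be a real symmetric N×N matrix with columns d₁, …, d_N. Then the Kalman rank condition rank(D, AD, …, A^{N−1}D) = N holds if and only if, for each l = 1, …, m, the set of columns {d_{μ_{l−1}+1}, …, d_{μ_l}} indexed by block l is linearly independent in ℝ^N. -/
/-- The Kalman matrix `(D, AD, A²D, …, A^{M−1}D)` of a pair of square matrices,
viewed as a matrix indexed by `n × (Fin M × n)` whose `(i, (k, j))` entry is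
`(A^k * D) i j`. -/
def kalmanMatrix {n : Type*} [Fintype n] [DecidableEq n] (M : ℕ)
    (A D : Matrix n n ℝ) : Matrix n (Fin M × n) ℝ :=
  fun i p => (A ^ (p.1 : ℕ) * D) i p.2

/-- `blockStart σ l = μ_{l-1} = σ₁ + ⋯ + σ_{l-1}`, the index at which block `l` begins
(0-based); block `l` consists of the indices `i` with `blockStart σ l ≤ i < blockStart σ l + σ l`. -/
def blockStart {m : ℕ} (σ : Fin m → ℕ) (l : Fin m) : ℕ :=
  ∑ k ∈ Finset.Iio l, σ k

open Matrix

lemma sum_Iic_eq_blockStart {m : ℕ} (σ : Fin m → ℕ) (l : Fin m) :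
    ∑ k ∈ Finset.Iic l, σ k = blockStart σ l + σ l := by
  rw [← Finset.Iio_insert, Finset.sum_insert (by simp), blockStart, add_comm]

lemma blockStart_lt_le {m : ℕ} (σ : Fin m → ℕ) {l l' : Fin m} (h : l < l') :
    blockStart σ l + σ l ≤ blockStart σ l' := by
  rw [← sum_Iic_eq_blockStart]
  exact Finset.sum_le_sum_of_subset (fun k hk => by
    simp only [Finset.mem_Iic] at hk
    simp only [Finset.mem_Iio]
    exact lt_of_le_of_lt hk h)

lemma block_unique {m N : ℕ} (σ : Fin m → ℕ) {l l' : Fin m} {i : Fin N}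
    (h1 : blockStart σ l ≤ (i : ℕ)) (h2 : (i : ℕ) < blockStart σ l + σ l)
    (h1' : blockStart σ l' ≤ (i : ℕ)) (h2' : (i : ℕ) < blockStart σ l' + σ l') :
    l = l' := by
  rcases lt_trichotomy l l' with h | h | h
  · exact absurd (blockStart_lt_le σ h) (by omega)
  · exact h
  · exact absurd (blockStart_lt_le σ h) (by omega)

lemma block_exists {m N : ℕ} (σ : Fin m → ℕ) (hσ : ∀ l, 0 < σ l)
    (hsum : ∑ l, σ l = N) (i : Fin N) :
    ∃ l, blockStart σ l ≤ (i : ℕ) ∧ (i : ℕ) < blockStart σ l + σ l := by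
  have hm : 0 < m := by
    rcases Nat.eq_zero_or_pos m with hm | hm
    · subst hm
      have hi := i.isLt
      simp at hsum
      omega
    · exact hm
  classical
  set S : Finset (Fin m) := Finset.univ.filter (fun l => blockStart σ l ≤ (i : ℕ)) with hS
  have hne : S.Nonempty := by
    refine ⟨⟨0, hm⟩, ?_⟩
    simp only [hS, Finset.mem_filter, Finset.mem_univ, true_and]
    have : Finset.Iio (⟨0, hm⟩ : Fin m) = ∅ := by
      apply Finset.eq_empty_of_forall_notMem
      intro k hk
      simp only [Finset.mem_Iio, Fin.lt_def] at hk
      omega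
    simp [blockStart, this]
  set l := S.max' hne with hl
  have hlS : l ∈ S := S.max'_mem hne
  have hle : blockStart σ l ≤ (i : ℕ) := by
    simpa [hS] using hlS
  refine ⟨l, hle, ?_⟩
  by_contra hcon
  push_neg at hcon
  rcases Nat.lt_or_ge (l.val + 1) m with hl1 | hl1
  · set l' : Fin m := ⟨l.val + 1, hl1⟩ with hl'
    have hIio : Finset.Iio l' = Finset.Iic l := by
      ext k
      simp only [Finset.mem_Iio, Finset.mem_Iic, Fin.lt_def, Fin.le_def, hl']
      omega
    have hbs : blockStart σ l' = blockStart σ l + σ l := by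
      rw [blockStart, hIio, sum_Iic_eq_blockStart]
    have : l' ∈ S := by
      simp only [hS, Finset.mem_filter, Finset.mem_univ, true_and, hbs]
      omega
    have h1 := S.le_max' l' this
    rw [← hl] at h1
    have h2 : l < l' := by simp [Fin.lt_def, hl']
    exact absurd h1 (not_le.mpr h2)
  · have huniv : Finset.Iic l = Finset.univ := by
      ext k
      simp only [Finset.mem_Iic, Finset.mem_univ, iff_true, Fin.le_def]
      omega
    have : blockStart σ l + σ l = N := by
      rw [← sum_Iic_eq_blockStart, huniv, hsum]
    omega

theorem stmt2 (N m : ℕ) (lam : Fin m → ℝ) (σ : Fin m → ℕ)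
    (hlam : Function.Injective lam) (hσ : ∀ l, 0 < σ l)
    (hsum : ∑ l, σ l = N)
    (A D : Matrix (Fin N) (Fin N) ℝ) (hD : D.IsSymm)
    (hAoff : ∀ i j : Fin N, i ≠ j → A i j = 0)
    (hAdiag : ∀ (l : Fin m) (i : Fin N),
      blockStart σ l ≤ (i : ℕ) → (i : ℕ) < blockStart σ l + σ l → A i i = lam l) :
    (kalmanMatrix N A D).rank = N ↔
      ∀ l : Fin m,
        LinearIndependent ℝ
          (fun i : {i : Fin N // blockStart σ l ≤ (i : ℕ) ∧ (i : ℕ) < blockStart σ l + σ l} =>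
            (fun r : Fin N => D r i.1)) := by
  classical
  have hmN : m ≤ N := by
    rw [← hsum]
    calc m = ∑ _l : Fin m, 1 := by simp
    _ ≤ ∑ l, σ l := Finset.sum_le_sum (fun l _ => hσ l)
  choose blk hblk1 hblk2 using block_exists σ hσ hsum
  have huniq : ∀ (l : Fin m) (i : Fin N),
      blockStart σ l ≤ (i : ℕ) → (i : ℕ) < blockStart σ l + σ l → blk i = l :=
    fun l i h1 h2 => block_unique σ (hblk1 i) (hblk2 i) h1 h2
  have hd : ∀ i, A i i = lam (blk i) := fun i => hAdiag (blk i) i (hblk1 i) (hblk2 i)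
  have hA : A = Matrix.diagonal (fun i => A i i) := by
    ext i j
    rcases eq_or_ne i j with rfl | h
    · simp
    · rw [Matrix.diagonal_apply_ne _ h]; exact hAoff i j h
  have hK : ∀ (k : ℕ) (i j : Fin N), (A ^ k * D) i j = lam (blk i) ^ k * D i j := by
    intro k i j
    conv_lhs => rw [hA]
    rw [Matrix.diagonal_pow, Matrix.diagonal_mul, Pi.pow_apply, hd]
  -- Step 1: rank = N ↔ transpose has trivial kernel
  have hrank : (kalmanMatrix N A D).rank = N ↔
      ∀ x : Fin N → ℝ, (kalmanMatrix N A D)ᵀ *ᵥ x = 0 → x = 0 := by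
    rw [← Matrix.rank_transpose]
    set K := (kalmanMatrix N A D)ᵀ with hKdef
    have hrn := LinearMap.finrank_range_add_finrank_ker K.mulVecLin
    have hfr : Module.finrank ℝ (Fin N → ℝ) = N := by simp
    rw [hfr] at hrn
    constructor
    · intro h x hx
      have hker : LinearMap.ker K.mulVecLin = ⊥ := by
        rw [← Submodule.finrank_eq_zero (R := ℝ)]
        rw [Matrix.rank] at h
        omega
      have hxk : x ∈ LinearMap.ker K.mulVecLin := by
        rw [LinearMap.mem_ker, Matrix.mulVecLin_apply]; exact hx
      rw [hker] at hxk; simpa using hxk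
    · intro h
      have hker : LinearMap.ker K.mulVecLin = ⊥ := by
        rw [Submodule.eq_bot_iff]
        intro x hx
        rw [LinearMap.mem_ker, Matrix.mulVecLin_apply] at hx
        exact h x hx
      rw [Matrix.rank]
      rw [hker] at hrn
      simpa using hrn
  -- Step 2: kernel condition in coordinates
  have hmv : ∀ x : Fin N → ℝ, ((kalmanMatrix N A D)ᵀ *ᵥ x = 0 ↔
      ∀ (k : Fin N) (j : Fin N), ∑ i, lam (blk i) ^ (k : ℕ) * D i j * x i = 0) := by
    intro x
    constructor
    · intro hx k j
      have := congrFun hx (k, j)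
      simpa [Matrix.mulVec, Matrix.transpose_apply, kalmanMatrix, dotProduct, hK]
        using this
    · intro hx
      funext p
      obtain ⟨k, j⟩ := p
      simpa [Matrix.mulVec, Matrix.transpose_apply, kalmanMatrix, dotProduct, hK]
        using hx k j
  -- Step 3: Vandermonde reduction to blockwise sums
  have hC : ∀ x : Fin N → ℝ,
      ((∀ (k : Fin N) (j : Fin N), ∑ i, lam (blk i) ^ (k : ℕ) * D i j * x i = 0) ↔
       (∀ (l : Fin m) (j : Fin N),
         ∑ i ∈ Finset.univ.filter (fun i => blk i = l), x i * D i j = 0)) := by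
    intro x
    constructor
    · intro h l j
      set v : Fin m → ℝ :=
        fun l => ∑ i ∈ Finset.univ.filter (fun i => blk i = l), x i * D i j with hv
      have hvz : v = 0 := by
        apply Matrix.eq_zero_of_forall_pow_sum_mul_pow_eq_zero hlam
        intro k
        have hkN : (k : ℕ) < N := lt_of_lt_of_le k.isLt hmN
        have h0 := h ⟨(k : ℕ), hkN⟩ j
        rw [← Finset.sum_fiberwise Finset.univ blk
          (fun i => lam (blk i) ^ (k : ℕ) * D i j * x i)] at h0
        calc ∑ l', v l' * lam l' ^ (k : ℕ)
            = ∑ l', ∑ i ∈ Finset.univ.filter (fun i => blk i = l'),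
                lam (blk i) ^ (k : ℕ) * D i j * x i := by
              apply Finset.sum_congr rfl
              intro l' _
              rw [hv, Finset.sum_mul]
              apply Finset.sum_congr rfl
              intro i hi
              simp only [Finset.mem_filter, Finset.mem_univ, true_and] at hi
              rw [hi]; ring
          _ = 0 := h0
      have := congrFun hvz l
      simpa [hv] using this
    · intro h k j
      rw [← Finset.sum_fiberwise Finset.univ blk
        (fun i => lam (blk i) ^ (k : ℕ) * D i j * x i)]
      apply Finset.sum_eq_zero
      intro l _
      calc ∑ i ∈ Finset.univ.filter (fun i => blk i = l),
            lam (blk i) ^ (k : ℕ) * D i j * x i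
          = lam l ^ (k : ℕ) *
              ∑ i ∈ Finset.univ.filter (fun i => blk i = l), x i * D i j := by
            rw [Finset.mul_sum]
            apply Finset.sum_congr rfl
            intro i hi
            simp only [Finset.mem_filter, Finset.mem_univ, true_and] at hi
            rw [hi]; ring
        _ = 0 := by rw [h l j, mul_zero]
  have hfilter : ∀ l : Fin m, Finset.univ.filter (fun i => blk i = l) =
      Finset.univ.filter
        (fun i : Fin N => blockStart σ l ≤ (i : ℕ) ∧ (i : ℕ) < blockStart σ l + σ l) := by
    intro l
    ext i
    simp only [Finset.mem_filter, Finset.mem_univ, true_and]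
    constructor
    · rintro rfl; exact ⟨hblk1 i, hblk2 i⟩
    · rintro ⟨h1, h2⟩; exact huniq l i h1 h2
  rw [hrank]
  constructor
  · intro H l
    rw [Fintype.linearIndependent_iff]
    intro g hg
    set x : Fin N → ℝ := fun i =>
      if h : blockStart σ l ≤ (i : ℕ) ∧ (i : ℕ) < blockStart σ l + σ l
      then g ⟨i, h⟩ else 0 with hxdef
    have hx0 : x = 0 := by
      apply H
      rw [hmv x, hC x]
      intro l' j
      rcases eq_or_ne l' l with rfl | hne
      · rw [hfilter l',
          Finset.sum_subtype (p := fun i : Fin N =>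
            blockStart σ l' ≤ (i : ℕ) ∧ (i : ℕ) < blockStart σ l' + σ l')
            (Finset.univ.filter _) (fun i => by simp) (fun i => x i * D i j)]
        have hgj := congrFun hg j
        simp only [Finset.sum_apply, Pi.smul_apply, smul_eq_mul, Pi.zero_apply] at hgj
        calc ∑ p : {i : Fin N // blockStart σ l' ≤ (i : ℕ) ∧ (i : ℕ) < blockStart σ l' + σ l'},
              x p.1 * D p.1 j
            = ∑ p : {i : Fin N // blockStart σ l' ≤ (i : ℕ) ∧ (i : ℕ) < blockStart σ l' + σ l'},
              g p * D j p.1 := by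
              apply Finset.sum_congr rfl
              intro p _
              rw [hxdef]
              simp only []
              rw [dif_pos p.2, hD.apply p.1 j]
          _ = 0 := hgj
      · apply Finset.sum_eq_zero
        intro i hi
        simp only [Finset.mem_filter, Finset.mem_univ, true_and] at hi
        have hxi : x i = 0 := by
          rw [hxdef]
          simp only []
          rw [dif_neg]
          rintro ⟨h1, h2⟩
          exact hne ((huniq l i h1 h2).symm.trans hi).symm
        rw [hxi, zero_mul]
    intro p
    have hp := congrFun hx0 p.1
    rw [hxdef] at hp
    simp only [Pi.zero_apply] at hp
    rw [dif_pos p.2] at hp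
    simpa using hp
  · intro H x hx
    rw [hmv x, hC x] at hx
    funext i
    have hLI := Fintype.linearIndependent_iff.mp (H (blk i))
    have hsz : ∑ p : {i' : Fin N // blockStart σ (blk i) ≤ (i' : ℕ) ∧
        (i' : ℕ) < blockStart σ (blk i) + σ (blk i)},
        x p.1 • (fun r : Fin N => D r p.1) = 0 := by
      funext j
      simp only [Finset.sum_apply, Pi.smul_apply, smul_eq_mul, Pi.zero_apply]
      rw [← Finset.sum_subtype (Finset.univ.filter
        (fun i' : Fin N => blockStart σ (blk i) ≤ (i' : ℕ) ∧
          (i' : ℕ) < blockStart σ (blk i) + σ (blk i))) (fun i' => by simp)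
        (fun i' => x i' * D j i')]
      rw [← hfilter]
      calc ∑ i' ∈ Finset.univ.filter (fun i' => blk i' = blk i), x i' * D j i'
          = ∑ i' ∈ Finset.univ.filter (fun i' => blk i' = blk i), x i' * D i' j := by
            apply Finset.sum_congr rfl
            intro i' _
            rw [hD.apply i' j]
        _ = 0 := hx (blk i) j
    have := hLI (fun p => x p.1) hsz ⟨i, hblk1 i, hblk2 i⟩
    simpa using this
end

section
/- Let A be the diagonal matrix with distinct eigenvalues λ₁, …, λ_m of multiplicities σ₁, …, σ_m as in the block structure, and assume the multiplicities are ordered σ₁ ≥ σ₂ ≥ … ≥ σ_m > 0. Then there exists a real symmetric positive semidefinite N×N matrix D with rank(D) = σ₁ such that the Kalman rank condition rank(D, AD, …, A^{N−1}D) = N holds. -/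
/-!
Write the coordinates as pairs `(l, r)` with `r < σ l` the position of the coordinate inside
block `l`, and let `D` be the pull-back of the identity of size `σ₁` along `(l, r) ↦ r`
(so `D (l, r) (l', r') = 1` iff `r = r'`). A pull-back of a positive semidefinite matrix is
positive semidefinite, and since the first block is the longest every position occurs, so
`rank D = σ₁`. If `p_l` is the Lagrange polynomial with `p_l(λ_k) = δ_kl` over the eigenvalues
of `A`, then `p_l(A) D` keeps the rows of `D` in block `l` and kills the others. Since `D` is the
identity on each diagonal block, the column of `p_l(A) D` at a coordinate `i` of block `l` is
`e_i`, and as `deg p_l < N` it lies in the column space of the Kalman matrix.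
-/

open Polynomial Matrix Finset

section Blocks

variable {m : ℕ} (σ : Fin m → ℕ)

theorem val_finSigmaFinEquiv (l : Fin m) (r : Fin (σ l)) :
    (finSigmaFinEquiv ⟨l, r⟩ : ℕ) = blockStart σ l + r := by
  rw [finSigmaFinEquiv_apply, blockStart]
  congr 1
  refine Finset.sum_bij (fun i _ => Fin.castLE l.2.le i) (fun i _ => mem_Iio.2 i.2)
    (fun _ _ _ _ h => Fin.castLE_injective _ h)
    (fun k hk => ⟨⟨k, Fin.lt_def.1 (mem_Iio.1 hk)⟩, mem_univ _, rfl⟩) (fun _ _ => rfl)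

theorem val_eq_blockStart_add (i : Fin (∑ l, σ l)) :
    (i : ℕ) = blockStart σ (finSigmaFinEquiv.symm i).1 + (finSigmaFinEquiv.symm i).2 := by
  conv_lhs => rw [← finSigmaFinEquiv.apply_symm_apply i]
  exact val_finSigmaFinEquiv σ _ _

theorem eq_diagonal_of_blockStart {lam : Fin m → ℝ}
    {A : Matrix (Fin (∑ l, σ l)) (Fin (∑ l, σ l)) ℝ} (hAoff : ∀ i j, i ≠ j → A i j = 0)
    (hAdiag : ∀ (l : Fin m) (i : Fin (∑ l, σ l)),
      blockStart σ l ≤ (i : ℕ) → (i : ℕ) < blockStart σ l + σ l → A i i = lam l) :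
    A = diagonal fun i => lam (finSigmaFinEquiv.symm i).1 := by
  ext i j
  rcases eq_or_ne i j with rfl | hij
  · have hi := val_eq_blockStart_add σ i
    have hr := (finSigmaFinEquiv.symm i).2.2
    rw [diagonal_apply_eq]
    exact hAdiag _ i (by omega) (by omega)
  · rw [hAoff i j hij, diagonal_apply_ne _ hij]

end Blocks

namespace Matrix

variable {n : Type*} [Fintype n]

theorem rank_one_submatrix_of_surjective {R o : Type*} [CommSemiring R] [StrongRankCondition R]
    [Fintype o] [DecidableEq o] {f : n → o} (hf : Function.Surjective f) :
    ((1 : Matrix o o R).submatrix f f).rank = Fintype.card o := by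
  refine le_antisymm ((rank_submatrix_le _ f f).trans rank_one.le) ?_
  obtain ⟨g, hg⟩ := hf.hasRightInverse
  have h := rank_submatrix_le ((1 : Matrix o o R).submatrix f f) g g
  rwa [submatrix_submatrix, hg.comp_eq_id, submatrix_id_id, rank_one] at h

variable [DecidableEq n]

theorem aeval_diagonal {R : Type*} [CommRing R] (d : n → R) (p : R[X]) :
    aeval (diagonal d) p = diagonal fun i => p.eval (d i) := by
  induction p using Polynomial.induction_on' with
  | add p q hp hq => simp [hp, hq]
  | monomial k a => simp [diagonal_pow, algebraMap_eq_diagonal]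

theorem aeval_mul_mulVec_mem_range_kalmanMatrix {M : ℕ} (A D : Matrix n n ℝ) {p : ℝ[X]}
    (hp : p.natDegree < M) (v : n → ℝ) :
    (aeval A p * D) *ᵥ v ∈ LinearMap.range (kalmanMatrix M A D).mulVecLin := by
  refine ⟨fun q => p.coeff q.1 * v q.2, ?_⟩
  rw [aeval_eq_sum_range' hp, ← Fin.sum_univ_eq_sum_range, Finset.sum_mul]
  funext i
  simp only [mulVecLin_apply, kalmanMatrix, mulVec, dotProduct, Fintype.sum_prod_type, sum_apply,
    smul_mul_assoc, smul_apply, smul_eq_mul, Finset.sum_mul]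
  rw [Finset.sum_comm]
  exact sum_congr rfl fun _ _ => sum_congr rfl fun _ _ => by ring

theorem rank_kalmanMatrix_eq_card {M : ℕ} {A D : Matrix n n ℝ}
    (h : ∀ i, ∃ p : ℝ[X], p.natDegree < M ∧
      (aeval A p * D) *ᵥ Pi.single i 1 = Pi.single i 1) :
    (kalmanMatrix M A D).rank = Fintype.card n := by
  have hrange : LinearMap.range (kalmanMatrix M A D).mulVecLin = ⊤ := by
    rw [← top_le_iff, ← (Pi.basisFun ℝ n).span_eq, Submodule.span_le]
    rintro - ⟨i, rfl⟩
    obtain ⟨p, hp, hpi⟩ := h i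
    simpa [hpi] using aeval_mul_mulVec_mem_range_kalmanMatrix A D hp (Pi.single i 1)
  rw [rank, hrange, finrank_top, Module.finrank_fintype_fun_eq_card]

theorem rank_kalmanMatrix_diagonal_eq_card {ι : Type*} [DecidableEq ι] {M : ℕ}
    (hM : Fintype.card n ≤ M) {lam : ι → ℝ} (hlam : Function.Injective lam) (b : n → ι)
    {D : Matrix n n ℝ} (hD : ∀ i j, b i = b j → D i j = if i = j then 1 else 0) :
    (kalmanMatrix M (diagonal fun i => lam (b i)) D).rank = Fintype.card n := by
  refine rank_kalmanMatrix_eq_card fun i => ⟨Lagrange.basis (univ.image b) lam (b i), ?_, ?_⟩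
  · rw [Lagrange.natDegree_basis hlam.injOn (mem_image_of_mem b (mem_univ i))]
    have hcard : (univ.image b).card ≤ Fintype.card n := card_image_le
    have hpos := Fintype.card_pos_iff.2 ⟨i⟩
    omega
  · funext j
    rw [aeval_diagonal, mulVec_single_one]
    by_cases hj : b i = b j
    · simp [hj, Lagrange.eval_basis_self hlam.injOn (mem_image_of_mem b (mem_univ j)),
        hD j i hj.symm, Pi.single_apply]
    · have hji : j ≠ i := fun h => hj (h ▸ rfl)
      simp [Lagrange.eval_basis_of_ne hj (mem_image_of_mem b (mem_univ j)), hji]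

end Matrix

theorem stmt3_general (N m : ℕ) (hm : 0 < m) (lam : Fin m → ℝ) (σ : Fin m → ℕ)
    (hlam : Function.Injective lam)
    (hmono : ∀ k l : Fin m, k ≤ l → σ l ≤ σ k)
    (hsum : ∑ l, σ l = N)
    (A : Matrix (Fin N) (Fin N) ℝ)
    (hAoff : ∀ i j : Fin N, i ≠ j → A i j = 0)
    (hAdiag : ∀ (l : Fin m) (i : Fin N),
      blockStart σ l ≤ (i : ℕ) → (i : ℕ) < blockStart σ l + σ l → A i i = lam l) :
    ∃ D : Matrix (Fin N) (Fin N) ℝ, D.IsSymm ∧ D.PosSemidef ∧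
      D.rank = σ ⟨0, hm⟩ ∧ (kalmanMatrix N A D).rank = N := by
  subst hsum
  let blk (i : Fin (∑ l, σ l)) : Fin m := (finSigmaFinEquiv.symm i).1
  let pos (i : Fin (∑ l, σ l)) : Fin (σ ⟨0, hm⟩) :=
    Fin.castLE (hmono _ _ (Fin.le_def.2 (Nat.zero_le _))) (finSigmaFinEquiv.symm i).2
  have hpos : Function.Surjective pos := fun r => ⟨finSigmaFinEquiv ⟨⟨0, hm⟩, r⟩,
    Fin.ext (by rw [Fin.val_castLE, Equiv.symm_apply_apply])⟩
  have hinj i j (hb : blk i = blk j) (hp : pos i = pos j) : i = j := by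
    have hi := val_eq_blockStart_add σ i
    have hj := val_eq_blockStart_add σ j
    have hp' : ((finSigmaFinEquiv.symm i).2 : ℕ) = (finSigmaFinEquiv.symm j).2 :=
      congrArg Fin.val hp
    exact Fin.ext (by rw [hi, hj, hp']; exact congrArg (blockStart σ · + _) hb)
  refine ⟨(1 : Matrix _ _ ℝ).submatrix pos pos, isSymm_one.submatrix pos,
    PosSemidef.one.submatrix pos, by rw [rank_one_submatrix_of_surjective hpos, Fintype.card_fin],
    ?_⟩
  rw [eq_diagonal_of_blockStart σ hAoff hAdiag]
  refine (rank_kalmanMatrix_diagonal_eq_card (Fintype.card_fin _).le hlam blk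
    fun i j hij => ?_).trans (Fintype.card_fin _)
  rw [submatrix_apply, one_apply]
  exact if_congr ⟨hinj i j hij, congrArg pos⟩ rfl rfl

theorem stmt3 (N m : ℕ) (hm : 0 < m) (lam : Fin m → ℝ) (σ : Fin m → ℕ)
    (hlam : Function.Injective lam) (hσ : ∀ l, 0 < σ l)
    (hmono : ∀ k l : Fin m, k ≤ l → σ l ≤ σ k)
    (hsum : ∑ l, σ l = N)
    (A : Matrix (Fin N) (Fin N) ℝ)
    (hAoff : ∀ i j : Fin N, i ≠ j → A i j = 0)
    (hAdiag : ∀ (l : Fin m) (i : Fin N),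
      blockStart σ l ≤ (i : ℕ) → (i : ℕ) < blockStart σ l + σ l → A i i = lam l) :
    ∃ D : Matrix (Fin N) (Fin N) ℝ, D.IsSymm ∧ D.PosSemidef ∧
      D.rank = σ ⟨0, hm⟩ ∧ (kalmanMatrix N A D).rank = N :=
  stmt3_general N m hm lam σ hlam hmono hsum A hAoff hAdiag
end

section
/- Let A be the diagonal matrix with distinct eigenvalues λ₁, …, λ_m of multiplicities σ₁, …, σ_m as in the block structure, let D be a real symmetric N×N matrix, and assume the Kalman rank condition rank(D, AD, …, A^{N−1}D) = N holds. Then there exists a constant c > 0 such that for every U ∈ ℝ^N, c‖U‖² ≤ ‖DU‖² − Σ_{k≠l} ⟨D_l U_l, D_k U_k⟩, where the sum ranges over all ordered pairs (k, l) with 1 ≤ k, l ≤ m and k ≠ l, ‖·‖ is the Euclidean norm and ⟨·,·⟩ the Euclidean inner product on ℝ^N. -/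
/-- `D_l U_l = Σ_{i ∈ block l} u^(i) d_i ∈ ℝ^N`, the contribution of block `l` to `DU`. -/
def blockPart {N m : ℕ} (σ : Fin m → ℕ) (D : Matrix (Fin N) (Fin N) ℝ)
    (U : Fin N → ℝ) (l : Fin m) : Fin N → ℝ :=
  fun r => ∑ i : Fin N,
    if blockStart σ l ≤ (i : ℕ) ∧ (i : ℕ) < blockStart σ l + σ l then U i * D r i else 0

/-!
The blocks partition the indices, so `DU = ∑ₗ Dₗ Uₗ` and the right-hand side equals
`∑ₗ ‖Dₗ Uₗ‖² = ‖B U‖²`, where `B` stacks the maps `U ↦ Dₗ Uₗ`. If all `Dₗ Uₗ` vanish then,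
`D` being symmetric and `A` diagonal, `Uᵀ Aᵏ D = ∑ₗ λₗᵏ (Dₗ Uₗ)ᵀ = 0` for every `k`, so `U` is
orthogonal to the column space of the Kalman matrix, which is all of `ℝᴺ`. Hence `B` is
injective, and an injective linear map on a finite-dimensional space is bounded below.
-/

open Matrix

lemma sum_sq_sum_sub_sum_ne {ι κ R : Type*} [Fintype ι] [DecidableEq ι] [Fintype κ] [CommRing R]
    (b : ι → κ → R) :
    ∑ r, (∑ l, b l r) ^ 2 - ∑ k, ∑ l, (if k ≠ l then ∑ r, b l r * b k r else 0) =
      ∑ l, ∑ r, b l r ^ 2 := by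
  have hsplit : ∀ k l, ∑ r, b l r * b k r =
      (if k ≠ l then ∑ r, b l r * b k r else 0) + if k = l then ∑ r, b l r * b k r else 0 := by
    intro k l
    by_cases h : k = l <;> simp [h]
  have hexpand : ∑ r, (∑ l, b l r) ^ 2 = ∑ k, ∑ l, ∑ r, b l r * b k r := by
    simp only [sq, Finset.sum_mul_sum]
    rw [Finset.sum_comm]
    refine Finset.sum_congr rfl fun k _ => ?_
    rw [Finset.sum_comm]
    exact Finset.sum_congr rfl fun l _ => Finset.sum_congr rfl fun r _ => mul_comm _ _
  have hdiag : ∀ k, ∑ l, ∑ r, b l r * b k r =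
      ∑ l, (if k ≠ l then ∑ r, b l r * b k r else 0) + ∑ r, b k r ^ 2 := by
    intro k
    rw [Finset.sum_congr rfl fun l _ => hsplit k l, Finset.sum_add_distrib, Finset.sum_ite_eq]
    simp [sq]
  rw [hexpand, Finset.sum_congr rfl fun k _ => hdiag k, Finset.sum_add_distrib,
    add_sub_cancel_left]

lemma Matrix.eq_zero_of_vecMul_eq_zero_of_rank_eq_card {n p R : Type*} [Fintype n] [Fintype p]
    [Field R] [LinearOrder R] [IsStrictOrderedRing R] {M : Matrix n p R}
    (hM : M.rank = Fintype.card n) {v : n → R} (hv : v ᵥ* M = 0) : v = 0 := by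
  have hsurj : LinearMap.range M.mulVecLin = ⊤ :=
    Submodule.eq_top_of_finrank_eq (by rw [Module.finrank_fintype_fun_eq_card]; exact hM)
  obtain ⟨w, hw⟩ := LinearMap.range_eq_top.mp hsurj v
  rw [← dotProduct_self_eq_zero]
  calc v ⬝ᵥ v = v ⬝ᵥ (M *ᵥ w) := by rw [← mulVecLin_apply, hw]
    _ = 0 := by rw [dotProduct_mulVec, hv, zero_dotProduct]

lemma Matrix.exists_pos_mul_sum_sq_le_sum_sq_mulVec {ι κ : Type*} [Fintype ι] [Fintype κ]
    [DecidableEq κ] (B : Matrix ι κ ℝ) (hB : ∀ v, B *ᵥ v = 0 → v = 0) :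
    ∃ c : ℝ, 0 < c ∧ ∀ v : κ → ℝ, c * ∑ i, v i ^ 2 ≤ ∑ p, (B *ᵥ v) p ^ 2 := by
  have hker : LinearMap.ker (toEuclideanLin B) = ⊥ := by
    rw [LinearMap.ker_eq_bot']
    intro x hx
    exact PiLp.ext (congrFun (hB x.ofLp (by simpa using congrArg WithLp.ofLp hx)))
  obtain ⟨K, hKpos, hK⟩ := (toEuclideanLin B).exists_antilipschitzWith hker
  refine ⟨((K : ℝ) ^ 2)⁻¹, by positivity, fun v => ?_⟩
  have hle : ‖WithLp.toLp 2 v‖ ≤ K * ‖toEuclideanLin B (WithLp.toLp 2 v)‖ := by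
    simpa using hK.le_mul_dist (WithLp.toLp 2 v) 0
  have hsq := pow_le_pow_left₀ (norm_nonneg _) hle 2
  rw [mul_pow, EuclideanSpace.real_norm_sq_eq, EuclideanSpace.real_norm_sq_eq] at hsq
  rw [inv_mul_le_iff₀ (by positivity)]
  simpa using hsq

-- An `abbrev`, so that `if InBlock σ l i then …` is literally the test used in `blockPart`.
abbrev InBlock {m : ℕ} (σ : Fin m → ℕ) (l : Fin m) (i : ℕ) : Prop :=
  blockStart σ l ≤ i ∧ i < blockStart σ l + σ l

lemma sum_castLE_eq_blockStart {m : ℕ} (σ : Fin m → ℕ) (l : Fin m) :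
    ∑ i : Fin l, σ (Fin.castLE l.2.le i) = blockStart σ l := by
  have hIio : Finset.Iio l = Finset.univ.map (Fin.castLEEmb l.2.le) := by
    ext j
    simp only [Finset.mem_map, Finset.mem_univ, true_and, Finset.mem_Iio, Fin.castLEEmb_apply]
    exact ⟨fun h => ⟨⟨j, h⟩, rfl⟩, by rintro ⟨i, rfl⟩; exact Fin.lt_def.2 i.2⟩
  rw [blockStart, hIio, Finset.sum_map]
  rfl

lemma blockStart_add_le_of_lt {m : ℕ} (σ : Fin m → ℕ) {k l : Fin m} (h : k < l) :
    blockStart σ k + σ k ≤ blockStart σ l := by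
  rw [blockStart, blockStart, add_comm, ← Finset.sum_insert Finset.notMem_Iio_self,
    Finset.Iio_insert]
  exact Finset.sum_le_sum_of_subset fun j hj =>
    Finset.mem_Iio.2 (lt_of_le_of_lt (Finset.mem_Iic.1 hj) h)

lemma exists_inBlock {N m : ℕ} {σ : Fin m → ℕ} (hsum : ∑ l, σ l = N) (i : Fin N) :
    ∃ l, InBlock σ l i := by
  obtain ⟨⟨l, j⟩, hlj⟩ := finSigmaFinEquiv.surjective (Fin.cast hsum.symm i)
  have hi : (i : ℕ) = blockStart σ l + j := by
    simpa [sum_castLE_eq_blockStart] using (congrArg Fin.val hlj).symm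
  exact ⟨l, by omega⟩

lemma InBlock.unique {m : ℕ} {σ : Fin m → ℕ} {k l : Fin m} {i : ℕ}
    (hk : InBlock σ k i) (hl : InBlock σ l i) : k = l := by
  by_contra hne
  rcases lt_or_gt_of_ne hne with h | h <;>
  · have := blockStart_add_le_of_lt σ h
    omega

lemma sum_ite_inBlock {R : Type*} [AddCommMonoid R] {m : ℕ} {σ : Fin m → ℕ} {l : Fin m} {i : ℕ}
    (hl : InBlock σ l i) (f : Fin m → R) :
    ∑ k, (if InBlock σ k i then f k else 0) = f l := by
  rw [Finset.sum_eq_single l (fun k _ hkl => if_neg fun hk => hkl (hk.unique hl))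
    (fun h => absurd (Finset.mem_univ l) h), if_pos hl]

lemma mulVec_apply_eq_sum_blockPart {N m : ℕ} {σ : Fin m → ℕ} (hsum : ∑ l, σ l = N)
    (D : Matrix (Fin N) (Fin N) ℝ) (U : Fin N → ℝ) (r : Fin N) :
    (D *ᵥ U) r = ∑ l, blockPart σ D U l r := by
  simp only [blockPart]
  rw [Finset.sum_comm, mulVec, dotProduct]
  refine Finset.sum_congr rfl fun i _ => ?_
  obtain ⟨l, hl⟩ := exists_inBlock hsum i
  rw [sum_ite_inBlock (f := fun _ => U i * D r i) hl, mul_comm]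

def blockMatrix {N m : ℕ} (σ : Fin m → ℕ) (D : Matrix (Fin N) (Fin N) ℝ) :
    Matrix (Fin m × Fin N) (Fin N) ℝ :=
  Matrix.of fun p i => if InBlock σ p.1 i then D p.2 i else 0

lemma blockMatrix_mulVec_apply {N m : ℕ} (σ : Fin m → ℕ) (D : Matrix (Fin N) (Fin N) ℝ)
    (U : Fin N → ℝ) (l : Fin m) (r : Fin N) :
    (blockMatrix σ D *ᵥ U) (l, r) = blockPart σ D U l r := by
  simp only [mulVec, dotProduct, blockMatrix, of_apply, blockPart, ite_mul, zero_mul,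
    mul_comm (D _ _)]

lemma vecMul_kalmanMatrix_apply {N m M : ℕ} {lam : Fin m → ℝ} {σ : Fin m → ℕ}
    (hsum : ∑ l, σ l = N) {A D : Matrix (Fin N) (Fin N) ℝ} (hD : D.IsSymm) (hA : A.IsDiag)
    (hAdiag : ∀ l (i : Fin N), InBlock σ l i → A i i = lam l)
    (U : Fin N → ℝ) (k : Fin M) (j : Fin N) :
    (U ᵥ* kalmanMatrix M A D) (k, j) = ∑ l, lam l ^ (k : ℕ) * blockPart σ D U l j := by
  have hpow : ∀ i, (A ^ (k : ℕ) * D) i j = A i i ^ (k : ℕ) * D j i := by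
    intro i
    conv_lhs => rw [← hA.diagonal_diag, diagonal_pow, diagonal_mul, hD.apply]
    rfl
  simp only [vecMul, dotProduct, kalmanMatrix, blockPart, Finset.mul_sum, mul_ite, mul_zero]
  rw [Finset.sum_comm]
  refine Finset.sum_congr rfl fun i _ => ?_
  obtain ⟨l, hl⟩ := exists_inBlock hsum i
  rw [sum_ite_inBlock hl (fun l => lam l ^ (k : ℕ) * (U i * D j i)), hpow,
    hAdiag l i hl]
  ring

lemma eq_zero_of_blockMatrix_mulVec_eq_zero {N m : ℕ} {lam : Fin m → ℝ} {σ : Fin m → ℕ}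
    (hsum : ∑ l, σ l = N) {A D : Matrix (Fin N) (Fin N) ℝ} (hD : D.IsSymm) (hA : A.IsDiag)
    (hAdiag : ∀ l (i : Fin N), InBlock σ l i → A i i = lam l)
    (hK : (kalmanMatrix N A D).rank = N) {U : Fin N → ℝ} (hU : blockMatrix σ D *ᵥ U = 0) :
    U = 0 := by
  refine eq_zero_of_vecMul_eq_zero_of_rank_eq_card (by rw [hK, Fintype.card_fin]) ?_
  ext ⟨k, j⟩
  simp [vecMul_kalmanMatrix_apply hsum hD hA hAdiag, ← blockMatrix_mulVec_apply, hU]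

theorem stmt4_general (N m : ℕ) (lam : Fin m → ℝ) (σ : Fin m → ℕ)
    (hsum : ∑ l, σ l = N)
    (A D : Matrix (Fin N) (Fin N) ℝ) (hD : D.IsSymm)
    (hAoff : ∀ i j : Fin N, i ≠ j → A i j = 0)
    (hAdiag : ∀ (l : Fin m) (i : Fin N),
      blockStart σ l ≤ (i : ℕ) → (i : ℕ) < blockStart σ l + σ l → A i i = lam l)
    (hK : (kalmanMatrix N A D).rank = N) :
    ∃ c : ℝ, 0 < c ∧ ∀ U : Fin N → ℝ,
      c * (∑ i, U i ^ 2) ≤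
        (∑ r, D.mulVec U r ^ 2) -
          ∑ k : Fin m, ∑ l : Fin m,
            if k ≠ l then ∑ r, blockPart σ D U l r * blockPart σ D U k r else 0 := by
  obtain ⟨c, hc, hcoercive⟩ := exists_pos_mul_sum_sq_le_sum_sq_mulVec (blockMatrix σ D)
    fun U => eq_zero_of_blockMatrix_mulVec_eq_zero hsum hD hAoff (fun l i h => hAdiag l i h.1 h.2) hK
  refine ⟨c, hc, fun U => ?_⟩
  simp only [mulVec_apply_eq_sum_blockPart hsum, sum_sq_sum_sub_sum_ne]
  simpa only [Fintype.sum_prod_type, blockMatrix_mulVec_apply] using hcoercive U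

theorem stmt4 (N m : ℕ) (lam : Fin m → ℝ) (σ : Fin m → ℕ)
    (hlam : Function.Injective lam) (hσ : ∀ l, 0 < σ l)
    (hsum : ∑ l, σ l = N)
    (A D : Matrix (Fin N) (Fin N) ℝ) (hD : D.IsSymm)
    (hAoff : ∀ i j : Fin N, i ≠ j → A i j = 0)
    (hAdiag : ∀ (l : Fin m) (i : Fin N),
      blockStart σ l ≤ (i : ℕ) → (i : ℕ) < blockStart σ l + σ l → A i i = lam l)
    (hK : (kalmanMatrix N A D).rank = N) :
    ∃ c : ℝ, 0 < c ∧ ∀ U : Fin N → ℝ,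
      c * (∑ i, U i ^ 2) ≤
        (∑ r, D.mulVec U r ^ 2) -
          ∑ k : Fin m, ∑ l : Fin m,
            if k ≠ l then ∑ r, blockPart σ D U l r * blockPart σ D U k r else 0 :=
  stmt4_general N m lam σ hsum A D hD hAoff hAdiag hK
end

section
/- Let A be the diagonal matrix with distinct eigenvalues λ₁, …, λ_m of multiplicities σ₁, …, σ_m as in the block structure, let D = (d_{ij}) be a real symmetric N×N matrix, and assume the Kalman rank condition rank(D, AD, …, A^{N−1}D) = N holds. Then there exists a constant c > 0 with the following property: for every complex Hilbert space H and all vectors u^(1), …, u^(N) ∈ H satisfying ⟨u^(i), u^(j)⟩_H = 0 whenever i belongs to block k and j belongs to block l with k ≠ l, one has Σ_{i=1}^N ‖u^(i)‖²_H ≤ c · Σ_{i=1}^N ‖Σ_{j=1}^N d_{ij} u^(j)‖²_H. -/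
/-!
Cross-block orthogonality splits `∑ᵢ ‖(DU)ᵢ‖²` into the sum over the blocks `l` of
`∑ᵢ ‖(D Pₗ U)ᵢ‖²`, where `Pₗ U` keeps only the components of `U` in block `l`; this is
`∑ ‖(B U)ₚ‖²` for the real matrix `B` stacking the matrices `D Pₗ`. A vector `x` supported on
block `l` satisfies `xᵀA = λₗ xᵀ`, so `xᵀD = 0` forces `xᵀ(D, AD, …, A^{N−1}D) = 0`, hence
`x = 0` by the Kalman rank condition; as `D` is symmetric, `B` is therefore injective. A left
inverse `T` of `B` gives `U = T (B U)`, and Cauchy–Schwarz bounds `∑ ‖Uⱼ‖²` by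
`(∑ T²) · ∑ ‖(B U)ₚ‖²` in any normed space.
-/

open Matrix

section Pythagoras

variable {𝕜 E : Type*} [RCLike 𝕜] [SeminormedAddCommGroup E] [InnerProductSpace 𝕜 E]

theorem norm_sum_sq_eq_sum_norm_sq {β : Type*} [Fintype β] {v : β → E}
    (hv : Pairwise fun a b => inner 𝕜 (v a) (v b) = 0) :
    ‖∑ a, v a‖ ^ 2 = ∑ a, ‖v a‖ ^ 2 := by
  have hdiag : ∀ a, ∑ b, inner 𝕜 (v a) (v b) = inner 𝕜 (v a) (v a) := fun a =>
    Fintype.sum_eq_single a fun b hb => hv hb.symm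
  simp_rw [@norm_sq_eq_re_inner 𝕜, sum_inner, inner_sum, hdiag, map_sum]

theorem norm_sum_sq_eq_sum_norm_sq_fiberwise {β κ : Type*} [Fintype β] [DecidableEq β]
    [Fintype κ] (f : κ → β) {w : κ → E} (hw : ∀ j j', f j ≠ f j' → inner 𝕜 (w j) (w j') = 0) :
    ‖∑ j, w j‖ ^ 2 = ∑ b, ‖∑ j with f j = b, w j‖ ^ 2 := by
  rw [← Finset.sum_fiberwise Finset.univ f w]
  refine norm_sum_sq_eq_sum_norm_sq (𝕜 := 𝕜) fun a b hab => ?_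
  simp_rw [sum_inner, inner_sum]
  refine Finset.sum_eq_zero fun j hj => Finset.sum_eq_zero fun j' hj' => hw j j' ?_
  rwa [(Finset.mem_filter.mp hj).2, (Finset.mem_filter.mp hj').2]

end Pythagoras

namespace Matrix

variable {ι κ : Type*}

section Finite

variable [Fintype ι] [Fintype κ]

theorem eq_zero_of_vecMul_eq_zero_of_rank_eq_card_s6 {K : Type*} [Field K] {C : Matrix ι κ K}
    (hC : C.rank = Fintype.card ι) {x : ι → K} (hx : x ᵥ* C = 0) : x = 0 := by
  have hrows : LinearIndependent K C.row := by
    rw [linearIndependent_iff_card_eq_finrank_span, ← hC, rank_eq_finrank_span_row]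
    rfl
  exact vecMul_injective_iff.mpr hrows (hx.trans (zero_vecMul C).symm)

theorem exists_mul_eq_one_of_mulVec_injective [DecidableEq ι] [DecidableEq κ] {K : Type*}
    [Field K] {B : Matrix ι κ K} (hB : Function.Injective B.mulVec) :
    ∃ T : Matrix κ ι K, T * B = 1 := by
  obtain ⟨g, hg⟩ := B.mulVecLin.exists_leftInverse_of_injective (LinearMap.ker_eq_bot.mpr hB)
  refine ⟨LinearMap.toMatrix' g, ?_⟩
  rw [← LinearMap.toMatrix'_toLin' B, ← LinearMap.toMatrix'_comp, toLin'_apply', hg,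
    LinearMap.toMatrix'_id]

theorem vecMul_eq_smul_of_support_subset_fiber {β : Type*} {A : Matrix κ κ ℝ}
    (hA : ∀ i j, i ≠ j → A i j = 0) {f : κ → β} {g : β → ℝ} (hdiag : ∀ i, A i i = g (f i))
    {b : β} {x : κ → ℝ} (hx : ∀ j, f j ≠ b → x j = 0) : x ᵥ* A = g b • x := by
  ext j
  have hcol : (x ᵥ* A) j = x j * A j j :=
    Fintype.sum_eq_single j fun i hij => by simp [hA i j hij]
  rw [hcol, hdiag, Pi.smul_apply, smul_eq_mul, mul_comm]
  by_cases hj : f j = b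
  · rw [hj]
  · rw [hx j hj, mul_zero, mul_zero]

section Coercive

variable {𝕜 : Type*} [RCLike 𝕜]

theorem sum_norm_sq_le_of_mul_eq_one [DecidableEq κ] {E : Type*} [SeminormedAddCommGroup E]
    [NormedSpace 𝕜 E] {T : Matrix κ ι ℝ} {B : Matrix ι κ ℝ} (hTB : T * B = 1) (v : κ → E) :
    ∑ j, ‖v j‖ ^ 2 ≤ (∑ j, ∑ i, T j i ^ 2) * ∑ i, ‖∑ k, (B i k : 𝕜) • v k‖ ^ 2 := by
  set w : ι → E := fun i => ∑ k, (B i k : 𝕜) • v k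
  have hv : ∀ j, v j = ∑ i, (T j i : 𝕜) • w i := by
    intro j
    simp_rw [w, Finset.smul_sum, smul_smul, ← RCLike.ofReal_mul]
    rw [Finset.sum_comm]
    simp_rw [← Finset.sum_smul, ← RCLike.ofReal_sum, ← mul_apply, hTB]
    simp [one_apply]
  have hvj : ∀ j, ‖v j‖ ^ 2 ≤ (∑ i, T j i ^ 2) * ∑ i, ‖w i‖ ^ 2 := fun j => calc
    ‖v j‖ ^ 2 ≤ (∑ i, |T j i| * ‖w i‖) ^ 2 := by
        gcongr
        rw [hv j]
        refine (norm_sum_le _ _).trans (Finset.sum_le_sum fun i _ => ?_)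
        rw [norm_smul, RCLike.norm_ofReal]
    _ ≤ (∑ i, |T j i| ^ 2) * ∑ i, ‖w i‖ ^ 2 := Finset.sum_mul_sq_le_sq_mul_sq _ _ _
    _ = (∑ i, T j i ^ 2) * ∑ i, ‖w i‖ ^ 2 := by simp only [sq_abs]
  rw [Finset.sum_mul]
  exact Finset.sum_le_sum fun j _ => hvj j

theorem exists_sum_norm_sq_le_of_mulVec_injective [DecidableEq ι] [DecidableEq κ]
    {B : Matrix ι κ ℝ} (hB : Function.Injective B.mulVec) :
    ∃ c : ℝ, 0 < c ∧ ∀ (E : Type*) [SeminormedAddCommGroup E] [NormedSpace 𝕜 E] (v : κ → E),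
      ∑ j, ‖v j‖ ^ 2 ≤ c * ∑ i, ‖∑ k, (B i k : 𝕜) • v k‖ ^ 2 := by
  obtain ⟨T, hTB⟩ := exists_mul_eq_one_of_mulVec_injective hB
  refine ⟨∑ j, ∑ i, T j i ^ 2 + 1, by positivity, fun E _ _ v => ?_⟩
  refine (sum_norm_sq_le_of_mul_eq_one (𝕜 := 𝕜) hTB v).trans ?_
  gcongr
  exact le_add_of_nonneg_right zero_le_one

end Coercive

end Finite

section SplitCols

variable {β R : Type*} [DecidableEq β]

def splitCols [Zero R] (f : κ → β) (D : Matrix ι κ R) : Matrix (β × ι) κ R :=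
  of fun p j => if f j = p.1 then D p.2 j else 0

@[simp]
theorem splitCols_apply [Zero R] (f : κ → β) (D : Matrix ι κ R) (b : β) (i : ι) (j : κ) :
    splitCols f D (b, i) j = if f j = b then D i j else 0 :=
  rfl

variable [Fintype κ]

theorem mulVec_splitCols_injective [CommRing R] {f : κ → β} {D : Matrix ι κ R}
    (hfiber : ∀ b (x : κ → R), (∀ j, f j ≠ b → x j = 0) → D *ᵥ x = 0 → x = 0) :
    Function.Injective (splitCols f D).mulVec := by
  rw [← coe_mulVecLin, injective_iff_map_eq_zero]
  intro x hx
  have hblock : ∀ b, (fun j => if f j = b then x j else 0) = 0 := fun b =>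
    hfiber b _ (fun j hj => if_neg hj) <| funext fun i => by
      simpa [mulVec, dotProduct, ite_mul] using congrFun hx (b, i)
  funext j
  simpa using congrFun (hblock (f j)) j

theorem sum_norm_sq_splitCols [Fintype ι] [Fintype β] {𝕜 E : Type*} [RCLike 𝕜]
    [SeminormedAddCommGroup E] [InnerProductSpace 𝕜 E] (f : κ → β) (D : Matrix ι κ ℝ) {u : κ → E}
    (hu : ∀ j j', f j ≠ f j' → inner 𝕜 (u j) (u j') = 0) :
    ∑ p, ‖∑ j, ((splitCols f D p j : ℝ) : 𝕜) • u j‖ ^ 2 =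
      ∑ i, ‖∑ j, (D i j : 𝕜) • u j‖ ^ 2 := by
  have hrow : ∀ b i, ∑ j, ((splitCols f D (b, i) j : ℝ) : 𝕜) • u j =
      ∑ j with f j = b, (D i j : 𝕜) • u j := fun b i => by
    rw [Finset.sum_filter]
    refine Finset.sum_congr rfl fun j _ => ?_
    rw [splitCols_apply]
    split_ifs <;> simp
  rw [Fintype.sum_prod_type, Finset.sum_comm]
  refine Finset.sum_congr rfl fun i _ => ?_
  simp_rw [hrow]
  refine (norm_sum_sq_eq_sum_norm_sq_fiberwise (𝕜 := 𝕜) f fun j j' hjj' => ?_).symm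
  rw [inner_smul_left, inner_smul_right, hu j j' hjj', mul_zero, mul_zero]

end SplitCols

end Matrix

theorem vecMul_kalmanMatrix_eq_zero {n : Type*} [Fintype n] [DecidableEq n] (M : ℕ)
    {A D : Matrix n n ℝ} {x : n → ℝ} {μ : ℝ} (hA : x ᵥ* A = μ • x) (hD : x ᵥ* D = 0) :
    x ᵥ* kalmanMatrix M A D = 0 := by
  have hpow : ∀ k : ℕ, x ᵥ* A ^ k = μ ^ k • x := by
    intro k
    induction k with
    | zero => simp
    | succ k ih => rw [pow_succ, ← vecMul_vecMul, ih, smul_vecMul, hA, smul_smul, pow_succ]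
  ext ⟨k, j⟩
  change (x ᵥ* (A ^ (k : ℕ) * D)) j = 0
  rw [← vecMul_vecMul, hpow, smul_vecMul, hD, smul_zero, Pi.zero_apply]

section Blocks

variable {m N : ℕ} {σ : Fin m → ℕ}

theorem blockStart_eq_sum_castLE (σ : Fin m → ℕ) (l : Fin m) :
    blockStart σ l = ∑ i : Fin l, σ (Fin.castLE l.2.le i) := by
  refine (Finset.sum_bij (fun i _ => Fin.castLE l.2.le i) (fun i _ => ?_)
    (fun _ _ _ _ h => Fin.castLE_injective _ h) (fun k hk => ⟨⟨k, ?_⟩, Finset.mem_univ _, rfl⟩)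
    (fun _ _ => rfl)).symm
  · simpa only [Finset.mem_Iio, Fin.lt_def, Fin.val_castLE] using i.2
  · simpa only [Finset.mem_Iio, Fin.lt_def] using hk

def blockOf (hsum : ∑ l, σ l = N) (i : Fin N) : Fin m :=
  (finSigmaFinEquiv.symm (i.cast hsum.symm)).1

theorem blockOf_spec (hsum : ∑ l, σ l = N) (i : Fin N) :
    blockStart σ (blockOf hsum i) ≤ i ∧
      (i : ℕ) < blockStart σ (blockOf hsum i) + σ (blockOf hsum i) := by
  have hval := finSigmaFinEquiv_apply (finSigmaFinEquiv.symm (i.cast hsum.symm))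
  rw [Equiv.apply_symm_apply, Fin.val_cast, ← blockStart_eq_sum_castLE] at hval
  have hlt := (finSigmaFinEquiv.symm (i.cast hsum.symm)).2.2
  unfold blockOf
  omega

end Blocks

theorem stmt6_general (N m : ℕ) (lam : Fin m → ℝ) (σ : Fin m → ℕ)
    (hsum : ∑ l, σ l = N)
    (A D : Matrix (Fin N) (Fin N) ℝ) (hD : D.IsSymm)
    (hAoff : ∀ i j : Fin N, i ≠ j → A i j = 0)
    (hAdiag : ∀ (l : Fin m) (i : Fin N),
      blockStart σ l ≤ (i : ℕ) → (i : ℕ) < blockStart σ l + σ l → A i i = lam l)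
    (hK : (kalmanMatrix N A D).rank = N) :
    ∃ c : ℝ, 0 < c ∧
      ∀ (H : Type) [NormedAddCommGroup H] [InnerProductSpace ℂ H] (u : Fin N → H),
        (∀ k l : Fin m, k ≠ l → ∀ i j : Fin N,
          blockStart σ k ≤ (i : ℕ) → (i : ℕ) < blockStart σ k + σ k →
          blockStart σ l ≤ (j : ℕ) → (j : ℕ) < blockStart σ l + σ l →
          (inner ℂ (u i) (u j) : ℂ) = 0) →
        ∑ i, ‖u i‖ ^ 2 ≤ c * ∑ i, ‖∑ j, (D i j : ℂ) • u j‖ ^ 2 := by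
  have hblock := blockOf_spec hsum
  have hdiag : ∀ i, A i i = lam (blockOf hsum i) := fun i =>
    hAdiag _ i (hblock i).1 (hblock i).2
  have hinj : Function.Injective (splitCols (blockOf hsum) D).mulVec :=
    mulVec_splitCols_injective fun l x hx hDx => by
      refine eq_zero_of_vecMul_eq_zero_of_rank_eq_card_s6 (C := kalmanMatrix N A D)
        (by rw [hK, Fintype.card_fin])
        (vecMul_kalmanMatrix_eq_zero N (vecMul_eq_smul_of_support_subset_fiber hAoff hdiag hx) ?_)
      rwa [← mulVec_transpose, hD.eq]
  obtain ⟨c, hc, hbound⟩ := exists_sum_norm_sq_le_of_mulVec_injective (𝕜 := ℂ) hinj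
  refine ⟨c, hc, fun H _ _ u hu => ?_⟩
  have horth : ∀ j j', blockOf hsum j ≠ blockOf hsum j' → inner ℂ (u j) (u j') = 0 :=
    fun j j' h => hu _ _ h j j' (hblock j).1 (hblock j).2 (hblock j').1 (hblock j').2
  have hbound_u := hbound H u
  rwa [sum_norm_sq_splitCols _ D horth] at hbound_u

theorem stmt6 (N m : ℕ) (lam : Fin m → ℝ) (σ : Fin m → ℕ)
    (hlam : Function.Injective lam) (hσ : ∀ l, 0 < σ l)
    (hsum : ∑ l, σ l = N)
    (A D : Matrix (Fin N) (Fin N) ℝ) (hD : D.IsSymm)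
    (hAoff : ∀ i j : Fin N, i ≠ j → A i j = 0)
    (hAdiag : ∀ (l : Fin m) (i : Fin N),
      blockStart σ l ≤ (i : ℕ) → (i : ℕ) < blockStart σ l + σ l → A i i = lam l)
    (hK : (kalmanMatrix N A D).rank = N) :
    ∃ c : ℝ, 0 < c ∧
      ∀ (H : Type) [NormedAddCommGroup H] [InnerProductSpace ℂ H] (u : Fin N → H),
        (∀ k l : Fin m, k ≠ l → ∀ i j : Fin N,
          blockStart σ k ≤ (i : ℕ) → (i : ℕ) < blockStart σ k + σ k →
          blockStart σ l ≤ (j : ℕ) → (j : ℕ) < blockStart σ l + σ l →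
          (inner ℂ (u i) (u j) : ℂ) = 0) →
        ∑ i, ‖u i‖ ^ 2 ≤ c * ∑ i, ‖∑ j, (D i j : ℂ) • u j‖ ^ 2 :=
  stmt6_general N m lam σ hsum A D hD hAoff hAdiag hK
end

section
/- Let N ≥ 1 and let A and D be real symmetric N×N matrices satisfying the Kalman rank condition rank(D, AD, …, A^{N−1}D) = N. Let Ã = A ⊗ I₄ and D̃ = D ⊗ I₄ be the 4N×4N Kronecker products of A and D with the 4×4 identity matrix (so that Ã has block entries a_{ij} I₄ and D̃ has block entries d_{ij} I₄). Then rank(D̃, ÃD̃, Ã²D̃, …, Ã^{4N−1}D̃) = 4N. -/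
/-!
The Kalman matrix of `(A ⊗ I₄, D ⊗ I₄)` is, up to a permutation of its columns, the Kronecker
product of the Kalman matrix of `(A, D)` with `I₄`. A matrix of full row rank has a right
inverse `R`, and then `R ⊗ I₄` is a right inverse of its Kronecker product with `I₄`, so that
product again has full row rank. Finally, the Kalman matrix of length `4N` contains that of
length `N` as a block of columns, so it inherits full row rank from the hypothesis.
-/

open scoped Kronecker

namespace Matrix

variable {K : Type*} [Field K] {m n p : Type*} [Fintype m] [Fintype n] [DecidableEq m]

theorem exists_mul_eq_one_of_rank_eq_card_height {A : Matrix m n K}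
    (h : A.rank = Fintype.card m) : ∃ B : Matrix n m K, A * B = 1 := by
  classical
  have hrange : LinearMap.range A.mulVecLin = ⊤ :=
    Submodule.eq_top_of_finrank_eq (by rw [← rank, h, Module.finrank_fintype_fun_eq_card])
  obtain ⟨g, hg⟩ := A.mulVecLin.exists_rightInverse_of_surjective hrange
  refine ⟨LinearMap.toMatrix' g, toLin'.injective ?_⟩
  rwa [toLin'_mul, toLin'_one, toLin'_toMatrix']

theorem rank_eq_card_height_of_mul_eq_one {A : Matrix m n K} {B : Matrix n m K}
    (h : A * B = 1) : A.rank = Fintype.card m :=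
  le_antisymm A.rank_le_card_height (rank_one (R := K) (n := m) ▸ h ▸ A.rank_mul_le_left B)

theorem rank_kronecker_one_of_rank_eq_card_height [Fintype p] [DecidableEq p] {A : Matrix m n K}
    (h : A.rank = Fintype.card m) :
    (A ⊗ₖ (1 : Matrix p p K)).rank = Fintype.card m * Fintype.card p := by
  obtain ⟨B, hB⟩ := exists_mul_eq_one_of_rank_eq_card_height h
  rw [← Fintype.card_prod]
  refine rank_eq_card_height_of_mul_eq_one (B := B ⊗ₖ (1 : Matrix p p K)) ?_
  rw [← mul_kronecker_mul, hB, one_mul, one_kronecker_one]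

theorem kronecker_one_pow {R : Type*} [CommSemiring R] [DecidableEq n] [Fintype p] [DecidableEq p]
    (A : Matrix n n R) (k : ℕ) :
    (A ⊗ₖ (1 : Matrix p p R)) ^ k = (A ^ k) ⊗ₖ (1 : Matrix p p R) := by
  induction k with
  | zero => simp
  | succ k ih => rw [pow_succ, pow_succ, ih, ← mul_kronecker_mul, one_mul]

end Matrix

section Kalman

variable {n p : Type*} [Fintype n] [DecidableEq n]

theorem kalmanMatrix_kronecker_one [Fintype p] [DecidableEq p] (M : ℕ) (A D : Matrix n n ℝ) :
    kalmanMatrix M (A ⊗ₖ (1 : Matrix p p ℝ)) (D ⊗ₖ 1) =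
      (kalmanMatrix M A D ⊗ₖ (1 : Matrix p p ℝ)).reindex (Equiv.refl _) (Equiv.prodAssoc _ _ _) := by
  ext ⟨i, s⟩ ⟨k, j, t⟩
  simp only [kalmanMatrix, Matrix.kronecker_one_pow, ← Matrix.mul_kronecker_mul, Matrix.one_mul]
  rfl

theorem kalmanMatrix_rank_mono {M M' : ℕ} (h : M ≤ M') (A D : Matrix n n ℝ) :
    (kalmanMatrix M A D).rank ≤ (kalmanMatrix M' A D).rank :=
  (kalmanMatrix M' A D).rank_submatrix_le id (Prod.map (Fin.castLE h) id)

theorem rank_kalmanMatrix_of_le {M M' : ℕ} (h : M ≤ M') {A D : Matrix n n ℝ}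
    (hK : (kalmanMatrix M A D).rank = Fintype.card n) :
    (kalmanMatrix M' A D).rank = Fintype.card n :=
  le_antisymm (Matrix.rank_le_card_height _) (hK ▸ kalmanMatrix_rank_mono h A D)

end Kalman

theorem stmt8_general (N : ℕ)
    (A D : Matrix (Fin N) (Fin N) ℝ)
    (hK : (kalmanMatrix N A D).rank = N) :
    (kalmanMatrix (4 * N) (A ⊗ₖ (1 : Matrix (Fin 4) (Fin 4) ℝ))
        (D ⊗ₖ (1 : Matrix (Fin 4) (Fin 4) ℝ))).rank = 4 * N := by
  have hK' : (kalmanMatrix (4 * N) A D).rank = Fintype.card (Fin N) :=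
    rank_kalmanMatrix_of_le (M := N) (by omega) (by rwa [Fintype.card_fin])
  rw [kalmanMatrix_kronecker_one, Matrix.rank_reindex,
    Matrix.rank_kronecker_one_of_rank_eq_card_height hK', Fintype.card_fin, Fintype.card_fin,
    mul_comm]

theorem stmt8 (N : ℕ) (hN : 1 ≤ N)
    (A D : Matrix (Fin N) (Fin N) ℝ) (hA : A.IsSymm) (hD : D.IsSymm)
    (hK : (kalmanMatrix N A D).rank = N) :
    (kalmanMatrix (4 * N) (A ⊗ₖ (1 : Matrix (Fin 4) (Fin 4) ℝ))
        (D ⊗ₖ (1 : Matrix (Fin 4) (Fin 4) ℝ))).rank = 4 * N :=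
  stmt8_general N A D hK
end

section
/- There exist ν₀ > 0 and a function β : ℝ → ℂ such that for every ν ≥ ν₀, (β(ν)² + ν² + 1 + β(ν)) · (β(ν)² + ν² + 2 + 4β(ν)) − 4β(ν)² = 0, and β(ν) = i(ν + 3/(5ν)) − 2/(125ν²) + o(ν⁻²) as ν → +∞; that is, ν² · (β(ν) − i(ν + 3/(5ν)) + 2/(125ν²)) → 0 as ν → +∞. -/
/-!
The quartic has four roots and `Q'(z) / Q(z) = ∑ 1 / (z - rᵢ)`, so some root lies within
`4 |Q(z)| / |Q'(z)|` of any point `z`. At `t = i(ν + 3/(5ν)) - 2/(125ν²)` one computes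
`Q(t) = O(1/ν)` while `Q'(t) ~ -10ν²`, hence a root `β(ν)` with `ν² |β(ν) - t| = O(1/ν)`.
-/

open Complex Filter Polynomial Topology

theorem Polynomial.Splits.exists_mem_roots_norm_sub_mul_le {K : Type*} [NormedField K]
    {p : K[X]} (hsplit : p.Splits) (hp : 0 < p.natDegree) (z : K) :
    ∃ r ∈ p.roots, ‖z - r‖ * ‖p.derivative.eval z‖ ≤ p.natDegree * ‖p.eval z‖ := by
  classical
  have hp0 : p ≠ 0 := by rintro rfl; simp at hp
  by_cases hz : p.eval z = 0
  · exact ⟨z, (mem_roots hp0).2 hz, by simp [hz]⟩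
  have hcard : Multiset.card p.roots = p.natDegree := splits_iff_card_roots.1 hsplit
  obtain ⟨r, hr, hmin⟩ := p.roots.toFinset.exists_min_image (fun w => ‖z - w‖)
    (Multiset.toFinset_nonempty.2 (Multiset.card_pos.1 (hcard ▸ hp)))
  rw [Multiset.mem_toFinset] at hr
  have hzr : 0 < ‖z - r‖ :=
    norm_pos_iff.2 (sub_ne_zero.2 fun h => hz ((mem_roots hp0).1 (h ▸ hr)))
  have hsum : ‖(p.roots.map fun w => 1 / (z - w)).sum‖ ≤ p.natDegree * (1 / ‖z - r‖) := by
    calc _ ≤ (p.roots.map fun w => ‖1 / (z - w)‖).sum := by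
          simpa [Multiset.map_map] using norm_multiset_sum_le (p.roots.map fun w => 1 / (z - w))
      _ ≤ Multiset.card (p.roots.map fun w => ‖1 / (z - w)‖) • (1 / ‖z - r‖) := by
          refine Multiset.sum_le_card_nsmul _ _ fun x hx => ?_
          obtain ⟨w, hw, rfl⟩ := Multiset.mem_map.1 hx
          rw [norm_div, norm_one]
          exact one_div_le_one_div_of_le hzr (hmin w (Multiset.mem_toFinset.2 hw))
      _ = _ := by simp [hcard]
  refine ⟨r, hr, ?_⟩
  rw [hsplit.eval_derivative_eq_eval_mul_sum hz, norm_mul]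
  calc ‖z - r‖ * (‖p.eval z‖ * ‖(p.roots.map fun w => 1 / (z - w)).sum‖)
      ≤ ‖z - r‖ * (‖p.eval z‖ * (p.natDegree * (1 / ‖z - r‖))) := by gcongr
    _ = p.natDegree * ‖p.eval z‖ := by field_simp

theorem tendsto_atTop_of_eq_of_mul_eq_one {E : Type*} [TopologicalSpace E] {f P : ℂ → E}
    (hf : ∀ x y : ℂ, x * y = 1 → f x = P y) (hP : ContinuousAt P 0) :
    Tendsto (fun ν : ℝ => f ν) atTop (𝓝 (P 0)) := by
  have hinv : Tendsto (fun ν : ℝ => ((ν⁻¹ : ℝ) : ℂ)) atTop (𝓝 ((0 : ℝ) : ℂ)) :=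
    (continuous_ofReal.tendsto 0).comp tendsto_inv_atTop_zero
  simp only [ofReal_inv, ofReal_zero] at hinv
  refine (hP.tendsto.comp hinv).congr' ?_
  filter_upwards [eventually_ne_atTop 0] with ν hν
  exact (hf ν _ (mul_inv_cancel₀ (ofReal_ne_zero.2 hν))).symm

noncomputable def charPoly (ω : ℂ) : ℂ[X] :=
  (X ^ 2 + C (ω ^ 2) + 1 + X) * (X ^ 2 + C (ω ^ 2) + 2 + 4 * X) - 4 * X ^ 2

theorem eval_charPoly (ω z : ℂ) :
    (charPoly ω).eval z = (z ^ 2 + ω ^ 2 + 1 + z) * (z ^ 2 + ω ^ 2 + 2 + 4 * z) - 4 * z ^ 2 := by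
  simp [charPoly]

theorem natDegree_charPoly (ω : ℂ) : (charPoly ω).natDegree = 4 := by
  unfold charPoly
  compute_degree!

theorem eval_derivative_charPoly (ω z : ℂ) :
    (charPoly ω).derivative.eval z =
      4 * z ^ 3 + 15 * z ^ 2 + (4 * ω ^ 2 + 6) * z + 5 * ω ^ 2 + 6 := by
  simp only [charPoly, map_pow, derivative_sub, derivative_mul, derivative_add, derivative_pow,
    Nat.cast_ofNat, Nat.add_one_sub_one, pow_one, derivative_X, mul_one, derivative_C, mul_zero,
    add_zero, derivative_one, derivative_ofNat, zero_mul, zero_add, eval_sub, eval_add, eval_mul,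
    eval_C, eval_X, eval_one, eval_pow, eval_ofNat]
  ring

noncomputable def approxRoot (ω : ℂ) : ℂ := I * (ω + 3 / (5 * ω)) - 2 / (125 * ω ^ 2)

theorem eval_approxRoot_charPoly {x y : ℂ} (hxy : x * y = 1) :
    (charPoly x).eval (approxRoot x) =
      -1137/625 * I * y - 391/15625 * y ^ 2 - 3327/3125 * I * y ^ 3
        + 16791/78125 * y ^ 4 + 31468/1953125 * I * y ^ 5 - 224/390625 * y ^ 6
        - 96/9765625 * I * y ^ 7 + 16/244140625 * y ^ 8 := by
  obtain rfl : x = y⁻¹ := eq_inv_of_mul_eq_one_left hxy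
  have hy : y ≠ 0 := by rintro rfl; simp at hxy
  rw [eval_charPoly, approxRoot]
  field_simp
  ring_nf
  simp only [I_sq, I_pow_three, I_pow_four]
  ring_nf

theorem eval_approxRoot_derivative_charPoly {x y : ℂ} (hxy : x * y = 1) :
    (charPoly x).derivative.eval (approxRoot x) / x ^ 2 =
      -10 + 6/5 * I * y - 1484/125 * y ^ 2 - 6/5 * I * y ^ 3 - 3291/625 * y ^ 4
        - 17952/15625 * I * y ^ 5 + 228/3125 * y ^ 6 + 144/78125 * I * y ^ 7
        - 32/1953125 * y ^ 8 := by
  obtain rfl : x = y⁻¹ := eq_inv_of_mul_eq_one_left hxy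
  have hy : y ≠ 0 := by rintro rfl; simp at hxy
  rw [eval_derivative_charPoly, approxRoot]
  field_simp
  ring_nf
  simp only [I_sq, I_pow_three]
  ring_nf

theorem tendsto_eval_approxRoot_charPoly :
    Tendsto (fun ν : ℝ => (charPoly ν).eval (approxRoot ν)) atTop (𝓝 0) := by
  simpa using tendsto_atTop_of_eq_of_mul_eq_one (fun _ _ hxy => eval_approxRoot_charPoly hxy)
    (by fun_prop)

theorem tendsto_eval_approxRoot_derivative_charPoly :
    Tendsto (fun ν : ℝ => (charPoly ν).derivative.eval (approxRoot ν) / (ν : ℂ) ^ 2) atTop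
      (𝓝 (-10)) := by
  simpa using tendsto_atTop_of_eq_of_mul_eq_one
    (fun _ _ hxy => eval_approxRoot_derivative_charPoly hxy) (by fun_prop)

theorem eventually_exists_root_charPoly_near_approxRoot :
    ∀ᶠ ν : ℝ in atTop, ∃ r, (charPoly ν).eval r = 0 ∧
      ν ^ 2 * ‖r - approxRoot ν‖ ≤ 4 * ‖(charPoly ν).eval (approxRoot ν)‖ := by
  filter_upwards [tendsto_eval_approxRoot_derivative_charPoly.norm.eventually_const_lt
    (show (1 : ℝ) < ‖(-10 : ℂ)‖ by norm_num), eventually_gt_atTop 0] with ν hlarge hν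
  have hderiv : ν ^ 2 ≤ ‖(charPoly ν).derivative.eval (approxRoot ν)‖ := by
    rw [norm_div, norm_pow, norm_real, Real.norm_of_nonneg hν.le,
      one_lt_div (by positivity)] at hlarge
    exact hlarge.le
  obtain ⟨r, hr, hle⟩ := (IsAlgClosed.splits (charPoly ν)).exists_mem_roots_norm_sub_mul_le
    (by rw [natDegree_charPoly]; norm_num) (approxRoot ν)
  rw [natDegree_charPoly, norm_sub_rev, mul_comm] at hle
  push_cast at hle
  exact ⟨r, (mem_roots'.1 hr).2, (mul_le_mul_of_nonneg_right hderiv (norm_nonneg _)).trans hle⟩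

theorem stmt11 :
    ∃ ν₀ : ℝ, 0 < ν₀ ∧ ∃ β : ℝ → ℂ,
      (∀ ν : ℝ, ν₀ ≤ ν →
        ((β ν) ^ 2 + (ν : ℂ) ^ 2 + 1 + β ν) *
            ((β ν) ^ 2 + (ν : ℂ) ^ 2 + 2 + 4 * β ν) - 4 * (β ν) ^ 2 = 0) ∧
      Tendsto (fun ν : ℝ =>
          (ν : ℂ) ^ 2 *
            (β ν - Complex.I * ((ν : ℂ) + 3 / (5 * (ν : ℂ))) + 2 / (125 * (ν : ℂ) ^ 2)))
        atTop (nhds 0) := by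
  obtain ⟨N, hN⟩ := eventually_atTop.1 eventually_exists_root_charPoly_near_approxRoot
  have hchoice : ∀ ν : ℝ, ∃ r : ℂ, max N 1 ≤ ν → (charPoly ν).eval r = 0 ∧
      ν ^ 2 * ‖r - approxRoot ν‖ ≤ 4 * ‖(charPoly ν).eval (approxRoot ν)‖ := fun ν => by
    by_cases hν : max N 1 ≤ ν
    · obtain ⟨r, hr⟩ := hN ν (le_of_max_le_left hν)
      exact ⟨r, fun _ => hr⟩
    · exact ⟨0, fun h => absurd h hν⟩
  choose β hβ using hchoice
  refine ⟨max N 1, by positivity, β, fun ν hν => by simpa [eval_charPoly] using (hβ ν hν).1, ?_⟩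
  refine squeeze_zero_norm' ?_ (by simpa using tendsto_eval_approxRoot_charPoly.norm.const_mul 4)
  filter_upwards [eventually_ge_atTop (max N 1)] with ν hν
  calc _ = ν ^ 2 * ‖β ν - approxRoot ν‖ := by
        rw [norm_mul, norm_pow, norm_real, Real.norm_eq_abs, sq_abs, approxRoot]
        congr 2
        ring
    _ ≤ _ := (hβ ν hν).2
end
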